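/- Let S ≤ M n be a submodule and let w ∈ (Fin n → Fin 4 → ZMod 2) be such that every block of w has even parity (Σ_{i : Fin 4} w j i = 0 for all j). Then w ∈ Ĉ(S) if and only if the extracted pair vector u(w) ∈ M n, defined by u(w) j = (w j 0 + w j 2, w j 0 + w j 1), lies in S. -/

import Mathlib

/-!
Since `uOf` is linear, kills every `beta j` and inverts `Ehat`, it maps `Ĉ(S)` into `S`.
Conversely, an even-parity block `(a, b, c, d)` equals `Emap (a + c, a + b) + (d, d, d, d)`,
so an even-parity `w` is `Ehat (uOf w)` plus a combination of the `beta j`.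
-/

/-- Binary symplectic representation of `n`-qubit Pauli operators (up to phase). -/
abbrev M (n : ℕ) : Type := Fin n → ZMod 2 × ZMod 2

/-- The symplectic form: two Paulis commute iff it vanishes. -/
def symp {n : ℕ} (u v : M n) : ZMod 2 :=
  ∑ j, ((u j).1 * (v j).2 + (u j).2 * (v j).1)

/-- The inner `[[4,2,2]]` encoding of one qubit-pair symplectic entry. -/
def Emap (p : ZMod 2 × ZMod 2) : Fin 4 → ZMod 2 := ![p.1 + p.2, p.1, p.2, 0]

/-- Blockwise `[[4,2,2]]` encoding. -/
def Ehat {n : ℕ} (v : M n) : Fin n → Fin 4 → ZMod 2 := fun j => Emap (v j)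

/-- The indicator vector of block `j` (the inner `XXXX`/`ZZZZ` stabilizer). -/
def beta {n : ℕ} (j : Fin n) : Fin n → Fin 4 → ZMod 2 :=
  fun j' _ => if j' = j then 1 else 0

/-- The concatenated binary code `Ĉ(S)`. -/
def Chat {n : ℕ} (S : Submodule (ZMod 2) (M n)) :
    Submodule (ZMod 2) (Fin n → Fin 4 → ZMod 2) :=
  Submodule.span (ZMod 2) (Set.range (beta (n := n)) ∪ Ehat '' (S : Set (M n)))

/-- The standard dot product on the concatenated space. -/
def dotB {n : ℕ} (w w' : Fin n → Fin 4 → ZMod 2) : ZMod 2 :=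
  ∑ j, ∑ i, w j i * w' j i

/-- The pair vector extracted from an even-parity block vector. -/
def uOf {n : ℕ} (w : Fin n → Fin 4 → ZMod 2) : M n :=
  fun j => (w j 0 + w j 2, w j 0 + w j 1)

def uOfLinear (n : ℕ) : (Fin n → Fin 4 → ZMod 2) →ₗ[ZMod 2] M n where
  toFun := uOf
  map_add' w w' := by ext j <;> simp only [uOf, Pi.add_apply, Prod.fst_add, Prod.snd_add] <;> ring
  map_smul' c w := by
    ext j <;> simp only [uOf, Pi.smul_apply, Prod.smul_fst, Prod.smul_snd, smul_eq_mul,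
      RingHom.id_apply] <;> ring

lemma uOf_beta {n : ℕ} (j : Fin n) : uOf (beta j) = 0 := by
  funext k
  simp only [uOf, beta]
  exact Prod.ext (CharTwo.add_self_eq_zero _) (CharTwo.add_self_eq_zero _)

lemma uOf_Ehat {n : ℕ} (v : M n) : uOf (Ehat v) = v := by
  funext k
  ext <;> simp only [uOf, Ehat, Emap, Fin.isValue, Matrix.cons_val] <;> grind

lemma Chat_le_comap_uOfLinear {n : ℕ} (S : Submodule (ZMod 2) (M n)) :
    Chat S ≤ S.comap (uOfLinear n) := by
  rw [Chat, Submodule.span_le]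
  rintro x (⟨j, rfl⟩ | ⟨v, hv, rfl⟩)
  · simp [uOfLinear, uOf_beta]
  · simpa [uOfLinear, uOf_Ehat] using hv

lemma beta_mem_Chat {n : ℕ} (S : Submodule (ZMod 2) (M n)) (j : Fin n) : beta j ∈ Chat S :=
  Submodule.subset_span (Or.inl ⟨j, rfl⟩)

lemma Ehat_mem_Chat {n : ℕ} {S : Submodule (ZMod 2) (M n)} {v : M n} (hv : v ∈ S) :
    Ehat v ∈ Chat S :=
  Submodule.subset_span (Or.inr ⟨v, hv, rfl⟩)

lemma eq_Emap_add_const_of_sum_eq_zero (x : Fin 4 → ZMod 2) (hx : ∑ i, x i = 0) :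
    x = Emap (x 0 + x 2, x 0 + x 1) + fun _ => x 3 := by
  rw [Fin.sum_univ_four] at hx
  funext i
  fin_cases i <;> simp only [Fin.reduceFinMk, Fin.isValue, Emap, Pi.add_apply, Matrix.cons_val,
    zero_add] <;> grind

lemma sum_smul_beta_apply {n : ℕ} (c : Fin n → ZMod 2) (j : Fin n) :
    (∑ k, c k • beta k) j = fun _ => c j := by
  funext i
  simp [beta, Finset.sum_apply]

lemma eq_Ehat_uOf_add_sum_smul_beta {n : ℕ} (w : Fin n → Fin 4 → ZMod 2)
    (hw : ∀ j, ∑ i, w j i = 0) :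
    w = Ehat (uOf w) + ∑ j, w j 3 • beta j := by
  funext j
  rw [Pi.add_apply, sum_smul_beta_apply]
  exact eq_Emap_add_const_of_sum_eq_zero (w j) (hw j)

theorem stmt5 (n : ℕ) (S : Submodule (ZMod 2) (M n)) (w : Fin n → Fin 4 → ZMod 2)
    (hw : ∀ j, ∑ i, w j i = 0) :
    w ∈ Chat S ↔ uOf w ∈ S := by
  refine ⟨fun hmem => Chat_le_comap_uOfLinear S hmem, fun hu => ?_⟩
  rw [eq_Ehat_uOf_add_sum_smul_beta w hw]
  exact add_mem (Ehat_mem_Chat hu) (sum_mem fun j _ => Submodule.smul_mem _ _ (beta_mem_Chat S j))
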